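/- arXiv:0710.5309 — 2 statements merged into one kernel-verified Lean document; each statement's English description precedes it below -/
import Mathlib

section
/- Let (E, F) be an interpolation pair of dyadic wavelet sets and let G ⊆ E ∪ F be a dyadic wavelet set such that G differs from each of E and F on a set of positive Lebesgue measure. Then σ_E^F ∘ σ_E^G = σ_F^G almost everywhere, and σ_F^G is not almost everywhere equal to id_ℝ; in particular {id_ℝ, σ_E^F, σ_E^G} is not a group under composition, so {E, F, G} is not an interpolation family of wavelet sets. -/
/-!
All the maps involved commute a.e. with the dyadic dilations, so `σ_E^F ∘ σ_E^G = σ_F^G` need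
only be checked on `F`. An interpolation map sends a point of its source to the unique
`2π`-congruent point of its target, and an involutive `σ_E^F` is also `σ_F^E`. On the
dilation orbit through `s ∈ F`, with point `e` in `E`, the point of `G ⊆ E ∪ F` is `e` or `s`:
if it is `e`, then `σ_E^G` fixes the orbit and `σ_E^F s = σ_F^G s`; if it is `s ≠ e`, then
`σ_E^G e ∈ F` and `σ_E^F` carries it back to `e`, so both sides fix `s`. The three negative
statements would each force `G` to be a.e. contained in `E` or `F`, and a wavelet set a.e.
contained in another is a.e. equal to it.
-/

open MeasureTheory Set
open scoped Real symmDiff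

noncomputable section

/-- An a.e. (modulo Lebesgue-null sets) partition of the set `A` by the family `P`. -/
def IsAEPartition {ι : Type*} (P : ι → Set ℝ) (A : Set ℝ) : Prop :=
  volume (A ∆ (⋃ i, P i)) = 0 ∧ ∀ i j : ι, i ≠ j → volume (P i ∩ P j) = 0

/-- `E ⊆ ℝ` is a dyadic wavelet set: its `2πℤ`-translates and its `2ℤ`-dilates each
partition `ℝ` modulo Lebesgue-null sets. -/
def IsDyadicWaveletSet (E : Set ℝ) : Prop :=
  MeasurableSet E ∧
  (∀ᵐ x : ℝ ∂volume, ∃! n : ℤ, x + 2 * Real.pi * n ∈ E) ∧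
  (∀ᵐ x : ℝ ∂volume, ∃! k : ℤ, (2 : ℝ) ^ k * x ∈ E)

/-- `σ` is (a representative of) the interpolation map `σ_E^F` for wavelet sets `E, F`. -/
def IsInterpolationMap (E F : Set ℝ) (σ : ℝ → ℝ) : Prop :=
  Measurable σ ∧ σ 0 = 0 ∧
  (∀ᵐ s : ℝ ∂volume, s ∈ E → σ s ∈ F ∧ ∃ n : ℤ, σ s - s = 2 * Real.pi * n) ∧
  (∀ n : ℤ, ∀ᵐ s : ℝ ∂volume, (2 : ℝ) ^ (-n) * s ∈ E →
    σ s = (2 : ℝ) ^ n * σ ((2 : ℝ) ^ (-n) * s))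

/-- The `2π`-congruence domain of a map `σ`. -/
def CongruenceDomain (σ : ℝ → ℝ) : Set ℝ :=
  {s : ℝ | ∃ n : ℤ, σ s - s = 2 * Real.pi * n}

/-- `A` is `2π`-translation congruent to `B`. -/
def TransCongruent (A B : Set ℝ) : Prop :=
  ∃ P : ℤ → Set ℝ, (∀ n, MeasurableSet (P n)) ∧ IsAEPartition P A ∧
    IsAEPartition (fun (n : ℤ) => (fun x => x + 2 * Real.pi * (n : ℝ)) '' P n) B

/-- `A` is `2`-dilation congruent to `B`. -/
def DilCongruent (A B : Set ℝ) : Prop :=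
  ∃ P : ℤ → Set ℝ, (∀ n, MeasurableSet (P n)) ∧ IsAEPartition P A ∧
    IsAEPartition (fun (n : ℤ) => (fun x => (2 : ℝ) ^ n * x) '' P n) B

open AddCommGroup

theorem modEq_two_pi_iff {a b : ℝ} :
    a ≡ b [PMOD 2 * π] ↔ ∃ n : ℤ, b - a = 2 * π * n := by
  simp only [modEq_iff_zsmul', zsmul_eq_mul, mul_comm]

theorem ae_forall_modEq_two_pi {P : ℝ → Prop} (h : ∀ᵐ x, P x) :
    ∀ᵐ x, ∀ y, x ≡ y [PMOD 2 * π] → P y := by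
  have htrans : ∀ᵐ x, ∀ n : ℤ, P (x + 2 * π * n) := ae_all_iff.mpr fun n =>
    (measurePreserving_add_right volume (2 * π * n)).quasiMeasurePreserving.ae h
  filter_upwards [htrans] with x hx y hxy
  obtain ⟨n, hn⟩ := modEq_two_pi_iff.mp hxy
  rw [show y = x + 2 * π * n by linarith]
  exact hx n

theorem ae_forall_two_zpow_mul {P : ℝ → Prop} (h : ∀ᵐ x, P x) :
    ∀ᵐ x, ∀ k : ℤ, P (2 ^ k * x) :=
  ae_all_iff.mpr fun k =>
    (Measure.quasiMeasurePreserving_smul volume (zpow_ne_zero k two_ne_zero)).ae h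

namespace IsDyadicWaveletSet

variable {E F : Set ℝ}

theorem ae_subsingleton_modEq (hE : IsDyadicWaveletSet E) :
    ∀ᵐ x, (E ∩ {y | x ≡ y [PMOD 2 * π]}).Subsingleton := by
  filter_upwards [hE.2.1] with x hx y ⟨hyE, hxy⟩ z ⟨hzE, hxz⟩
  obtain ⟨m, hm⟩ := modEq_two_pi_iff.mp hxy
  obtain ⟨n, hn⟩ := modEq_two_pi_iff.mp hxz
  have hmn : m = n := hx.unique (by rwa [show x + 2 * π * m = y by linarith])
    (by rwa [show x + 2 * π * n = z by linarith])
  subst hmn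
  linarith

/-- Both sets meet almost every `2π`-translation class in exactly one point. -/
theorem ae_eq_of_ae_le (hE : IsDyadicWaveletSet E) (hF : IsDyadicWaveletSet F)
    (h : E ≤ᵐ[volume] F) : E =ᵐ[volume] F := by
  refine h.antisymm ?_
  filter_upwards [hE.2.1, ae_forall_modEq_two_pi h, hF.ae_subsingleton_modEq]
    with x hx hEF hsub (hxF : x ∈ F)
  obtain ⟨n, hn, -⟩ := hx
  have hxy : x ≡ x + 2 * π * n [PMOD 2 * π] := modEq_two_pi_iff.mpr ⟨n, by ring⟩
  have heq : x + 2 * π * n = x := hsub ⟨hEF _ hxy hn, hxy⟩ ⟨hxF, modEq_rfl⟩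
  exact heq ▸ hn

theorem ae_eq_of_ae_eq_on (hE : IsDyadicWaveletSet E) {f g : ℝ → ℝ}
    (hf : ∀ᵐ s, ∀ n : ℤ, f (2 ^ n * s) = 2 ^ n * f s)
    (hg : ∀ᵐ s, ∀ n : ℤ, g (2 ^ n * s) = 2 ^ n * g s)
    (h : ∀ᵐ s, s ∈ E → f s = g s) :
    f =ᵐ[volume] g := by
  filter_upwards [hE.2.2, hf, hg, ae_forall_two_zpow_mul h] with s hEdil hfs hgs hfg
  obtain ⟨k, hk, -⟩ := hEdil
  have hk' := hfg k hk
  rw [hfs, hgs] at hk'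
  exact mul_left_cancel₀ (zpow_ne_zero k two_ne_zero) hk'

end IsDyadicWaveletSet

namespace IsInterpolationMap

variable {E F : Set ℝ} {σ : ℝ → ℝ}

theorem ae_mem_modEq (hσ : IsInterpolationMap E F σ) :
    ∀ᵐ s, s ∈ E → σ s ∈ F ∧ s ≡ σ s [PMOD 2 * π] := by
  filter_upwards [hσ.2.2.1] with s hs hsE
  exact ⟨(hs hsE).1, modEq_two_pi_iff.mpr (hs hsE).2⟩

theorem ae_apply_two_zpow_mul_of_mem (hσ : IsInterpolationMap E F σ) :
    ∀ᵐ s, ∀ k : ℤ, 2 ^ k * s ∈ E → σ (2 ^ k * s) = 2 ^ k * σ s := by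
  refine ae_all_iff.mpr fun k => ?_
  filter_upwards [hσ.2.2.2 (-k)] with s hs hsE
  rw [neg_neg] at hs
  rw [hs hsE, ← mul_assoc, ← zpow_add₀ two_ne_zero, add_neg_cancel, zpow_zero, one_mul]

/-- On the dilation orbit of `s`, `σ` is a translation at the point `2 ^ k * s ∈ E`, so
`σ s` is a dilate of a translate of `2 ^ k * s`; both operations preserve null sets. -/
theorem quasiMeasurePreserving (hE : IsDyadicWaveletSet E) (hσ : IsInterpolationMap E F σ) :
    Measure.QuasiMeasurePreserving σ volume volume := by
  refine ⟨hσ.1, Measure.AbsolutelyContinuous.mk fun N hN hN0 => ?_⟩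
  rw [Measure.map_apply hσ.1 hN, measure_eq_zero_iff_ae_notMem]
  rw [measure_eq_zero_iff_ae_notMem] at hN0
  filter_upwards [hE.2.2, hσ.ae_apply_two_zpow_mul_of_mem,
    ae_forall_two_zpow_mul (ae_forall_modEq_two_pi (ae_forall_two_zpow_mul hN0)),
    ae_forall_two_zpow_mul hσ.ae_mem_modEq] with s hEdil hdil hnull hmem
  obtain ⟨k, hk, -⟩ := hEdil
  have hσs : σ s = 2 ^ (-k) * σ (2 ^ k * s) := by
    rw [hdil k hk, zpow_neg, inv_mul_cancel_left₀ (zpow_ne_zero k two_ne_zero)]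
  rw [mem_preimage, hσs]
  exact hnull k _ (hmem k hk).2 (-k)

theorem ae_apply_two_zpow_mul (hE : IsDyadicWaveletSet E) (hσ : IsInterpolationMap E F σ) :
    ∀ᵐ s, ∀ n : ℤ, σ (2 ^ n * s) = 2 ^ n * σ s := by
  filter_upwards [hE.2.2, hσ.ae_apply_two_zpow_mul_of_mem,
    ae_forall_two_zpow_mul hσ.ae_apply_two_zpow_mul_of_mem] with s hEdil hdil hdil' n
  obtain ⟨k, hk, -⟩ := hEdil
  have hsplit : (2 : ℝ) ^ k = 2 ^ (k - n) * 2 ^ n := by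
    rw [← zpow_add₀ two_ne_zero, sub_add_cancel]
  have h := hdil' n (k - n) (by rwa [← mul_assoc, ← hsplit])
  rw [← mul_assoc, ← hsplit, hdil k hk, hsplit, mul_assoc] at h
  exact (mul_left_cancel₀ (zpow_ne_zero _ two_ne_zero) h).symm

theorem ae_apply_eq_of_modEq (hF : IsDyadicWaveletSet F) (hσ : IsInterpolationMap E F σ) :
    ∀ᵐ s, s ∈ E → ∀ y ∈ F, s ≡ y [PMOD 2 * π] → σ s = y := by
  filter_upwards [hσ.ae_mem_modEq, hF.ae_subsingleton_modEq] with s hmem hsub hsE y hyF hsy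
  exact hsub ⟨(hmem hsE).1, (hmem hsE).2⟩ ⟨hyF, hsy⟩

theorem ae_apply_eq_self_of_two_zpow_mul_mem (hF : IsDyadicWaveletSet F)
    (hσ : IsInterpolationMap E F σ) :
    ∀ᵐ s, ∀ k : ℤ, 2 ^ k * s ∈ E → 2 ^ k * s ∈ F → σ s = s := by
  filter_upwards [hσ.ae_apply_two_zpow_mul_of_mem,
    ae_forall_two_zpow_mul (hσ.ae_apply_eq_of_modEq hF)] with s hdil hfix k hkE hkF
  have h := hfix k hkE _ hkF modEq_rfl
  rw [hdil k hkE] at h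
  exact mul_left_cancel₀ (zpow_ne_zero k two_ne_zero) h

theorem ae_mem_of_apply_eq_self (hE : IsDyadicWaveletSet E) (hF : IsDyadicWaveletSet F)
    (hσ : IsInterpolationMap E F σ) : ∀ᵐ s, σ s = s → s ∈ F → s ∈ E := by
  filter_upwards [hE.2.2, hF.2.2, hσ.ae_apply_two_zpow_mul_of_mem,
    ae_forall_two_zpow_mul hσ.ae_mem_modEq] with s hEdil hFdil hdil hmem hfix hsF
  obtain ⟨k, hk, -⟩ := hEdil
  have hkF : 2 ^ k * s ∈ F := by simpa only [hdil k hk, hfix] using (hmem k hk).1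
  have hk0 : k = 0 := hFdil.unique hkF (by rwa [zpow_zero, one_mul])
  rwa [hk0, zpow_zero, one_mul] at hk

theorem ae_eq_of_ae_eq_id (hE : IsDyadicWaveletSet E) (hF : IsDyadicWaveletSet F)
    (hσ : IsInterpolationMap E F σ) (hid : σ =ᵐ[volume] id) : E =ᵐ[volume] F := by
  refine hE.ae_eq_of_ae_le hF ?_
  filter_upwards [hσ.ae_mem_modEq, hid] with s hmem (hs : σ s = s) (hsE : s ∈ E)
  exact hs ▸ (hmem hsE).1

/-- If `2 ^ k * σ s ∈ E`, then `σ (2 ^ k * σ s) = 2 ^ k * s` lies in `F` together with `s`,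
so `k = 0`. -/
theorem symm (hE : IsDyadicWaveletSet E) (hF : IsDyadicWaveletSet F)
    (hσ : IsInterpolationMap E F σ) (hinv : ∀ᵐ s, σ (σ s) = s) :
    IsInterpolationMap F E σ := by
  have hqmp := hσ.quasiMeasurePreserving hE
  refine ⟨hσ.1, hσ.2.1, ?_, fun n => ?_⟩
  · filter_upwards [hqmp.ae hE.2.2, hqmp.ae (hσ.ae_apply_two_zpow_mul hE),
      hqmp.ae (ae_forall_two_zpow_mul hσ.ae_mem_modEq), hinv, hF.2.2]
      with s hEdil hdil hmem hss hFdil hsF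
    obtain ⟨k, hk, -⟩ := hEdil
    have hkF := (hmem k hk).1
    rw [hdil, hss] at hkF
    have hk0 : k = 0 := hFdil.unique hkF (by rwa [zpow_zero, one_mul])
    rw [hk0, zpow_zero, one_mul] at hk
    obtain ⟨m, hm⟩ := modEq_two_pi_iff.mp (hmem 0 (by rwa [zpow_zero, one_mul])).2
    rw [zpow_zero, one_mul, hss] at hm
    exact ⟨hk, -m, by push_cast; linarith⟩
  · filter_upwards [hσ.ae_apply_two_zpow_mul hE] with s hs _
    rw [hs, ← mul_assoc, ← zpow_add₀ two_ne_zero, add_neg_cancel, zpow_zero, one_mul]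

end IsInterpolationMap

section InterpolationTriple

variable {E F G : Set ℝ} {σFE σEG σFG : ℝ → ℝ}

/-- The point of `G` in the dilation orbit of `s ∈ F` lies in `E ∪ F`, so it is either `s` or
the point of `E` in that orbit. -/
theorem ae_mem_of_two_zpow_mul_notMem (hE : IsDyadicWaveletSet E) (hF : IsDyadicWaveletSet F)
    (hG : IsDyadicWaveletSet G) (hGsub : G ⊆ E ∪ F) :
    ∀ᵐ s, s ∈ F → ∀ k : ℤ, 2 ^ k * s ∈ E → 2 ^ k * s ∉ G → s ∈ G := by
  filter_upwards [hE.2.2, hF.2.2, hG.2.2] with s hEdil hFdil hGdil hsF k hkE hkG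
  obtain ⟨m, hmG, -⟩ := hGdil
  rcases hGsub hmG with hmE | hmF
  · exact absurd (hEdil.unique hmE hkE ▸ hmG) hkG
  · rwa [hFdil.unique hmF (by rwa [zpow_zero, one_mul]), zpow_zero, one_mul] at hmG

theorem ae_comp_eq_self_of_mem_diff (hE : IsDyadicWaveletSet E) (hGsub : G ⊆ E ∪ F)
    (hσFE : IsInterpolationMap F E σFE) (hσEG : IsInterpolationMap E G σEG) :
    ∀ᵐ e, e ∈ E → e ∉ G → σFE (σEG e) = e := by
  filter_upwards [hσEG.ae_mem_modEq, hE.ae_subsingleton_modEq,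
    (hσEG.quasiMeasurePreserving hE).ae (hσFE.ae_apply_eq_of_modEq hE)]
    with e hmemEG hEsub hFE heE heG
  obtain ⟨hvG, hev⟩ := hmemEG heE
  have hvF : σEG e ∈ F := (hGsub hvG).resolve_left fun hvE =>
    heG (hEsub ⟨hvE, hev⟩ ⟨heE, modEq_rfl⟩ ▸ hvG)
  exact hFE hvF e heE hev.symm

theorem ae_comp_eq_of_mem (hE : IsDyadicWaveletSet E) (hF : IsDyadicWaveletSet F)
    (hG : IsDyadicWaveletSet G) (hGsub : G ⊆ E ∪ F) (hσFE : IsInterpolationMap F E σFE)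
    (hσEG : IsInterpolationMap E G σEG) (hσFG : IsInterpolationMap F G σFG) :
    ∀ᵐ s, s ∈ F → σFE (σEG s) = σFG s := by
  filter_upwards [hE.2.2, hG.2.2, hF.ae_subsingleton_modEq,
    ae_mem_of_two_zpow_mul_notMem hE hF hG hGsub, hσEG.ae_apply_eq_self_of_two_zpow_mul_mem hG,
    hσEG.ae_apply_two_zpow_mul hE,
    (hσEG.quasiMeasurePreserving hE).ae (hσFE.ae_apply_two_zpow_mul hF),
    ae_forall_two_zpow_mul (ae_comp_eq_self_of_mem_diff hE hGsub hσFE hσEG),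
    hσFE.ae_apply_eq_of_modEq hE, hσFG.ae_mem_modEq, hσFG.ae_apply_eq_of_modEq hG]
    with s hEdil hGdil hFsub hmemG hfixEG hdilEG hdilFE hcompE hFE hmemFG hFG hsF
  obtain ⟨k, hk, -⟩ := hEdil
  by_cases hkG : 2 ^ k * s ∈ G
  · rw [hfixEG k hk hkG]
    obtain ⟨hwG, hsw⟩ := hmemFG hsF
    rcases hGsub hwG with hwE | hwF
    · exact hFE hsF _ hwE hsw
    · have hws : σFG s = s := hFsub ⟨hwF, hsw⟩ ⟨hsF, modEq_rfl⟩
      have hk0 : k = 0 := hGdil.unique hkG (by rwa [zpow_zero, one_mul, ← hws])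
      rw [hk0, zpow_zero, one_mul] at hk
      rw [hws, hFE hsF s hk modEq_rfl]
  · have hsG := hmemG hsF k hk hkG
    have hk0 : (2 : ℝ) ^ k ≠ 0 := zpow_ne_zero k two_ne_zero
    calc σFE (σEG s) = (2 ^ k)⁻¹ * σFE (σEG (2 ^ k * s)) := by
          rw [hdilEG, hdilFE, inv_mul_cancel_left₀ hk0]
      _ = s := by rw [hcompE k hk hkG, inv_mul_cancel_left₀ hk0]
      _ = σFG s := (hFG hsF s hsG modEq_rfl).symm

theorem comp_ae_eq (hE : IsDyadicWaveletSet E) (hF : IsDyadicWaveletSet F)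
    (hG : IsDyadicWaveletSet G) (hGsub : G ⊆ E ∪ F) (hσFE : IsInterpolationMap F E σFE)
    (hσEG : IsInterpolationMap E G σEG) (hσFG : IsInterpolationMap F G σFG) :
    σFE ∘ σEG =ᵐ[volume] σFG := by
  refine hF.ae_eq_of_ae_eq_on ?_ (hσFG.ae_apply_two_zpow_mul hF)
    (ae_comp_eq_of_mem hE hF hG hGsub hσFE hσEG hσFG :)
  filter_upwards [hσEG.ae_apply_two_zpow_mul hE,
    (hσEG.quasiMeasurePreserving hE).ae (hσFE.ae_apply_two_zpow_mul hF)] with s hdilEG hdilFE n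
  simp only [Function.comp_apply, hdilEG, hdilFE]

theorem ae_le_of_interpolationMap_target_ae_eq (hG : IsDyadicWaveletSet G)
    (hGsub : G ⊆ E ∪ F) (hσFE : IsInterpolationMap F E σFE)
    (hσFG : IsInterpolationMap F G σFG) (h : σFG =ᵐ[volume] σFE) : G ≤ᵐ[volume] E := by
  filter_upwards [hσFE.ae_mem_modEq, hσFG.ae_apply_eq_of_modEq hG, h] with x hmemFE hFG hx hxG
  rcases hGsub hxG with hxE | hxF
  · exact hxE
  · rw [← hFG hxF x hxG modEq_rfl, hx]
    exact (hmemFE hxF).1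

theorem ae_le_of_interpolationMap_source_ae_eq (hE : IsDyadicWaveletSet E)
    (hF : IsDyadicWaveletSet F) (hG : IsDyadicWaveletSet G) (hGsub : G ⊆ E ∪ F)
    (hσEG : IsInterpolationMap E G σEG) (hσFG : IsInterpolationMap F G σFG)
    (h : σEG =ᵐ[volume] σFG) : G ≤ᵐ[volume] E := by
  have hFE : F ≤ᵐ[volume] E := by
    filter_upwards [hE.2.2, ae_mem_of_two_zpow_mul_notMem hE hF hG hGsub,
      hσEG.ae_apply_eq_self_of_two_zpow_mul_mem hG, hσFG.ae_mem_modEq,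
      hσFG.ae_apply_eq_of_modEq hG, hσEG.ae_mem_of_apply_eq_self hE hG, h]
      with s hEdil hmemG hfixEG hmemFG hFG hfixmem hs hsF
    obtain ⟨k, hk, -⟩ := hEdil
    have hsG : s ∈ G := by
      by_cases hkG : 2 ^ k * s ∈ G
      · rw [← hfixEG k hk hkG, hs]
        exact (hmemFG hsF).1
      · exact hmemG hsF k hk hkG
    exact hfixmem (hs.trans (hFG hsF s hsG modEq_rfl)) hsG
  filter_upwards [hFE] with x hx hxG
  exact (hGsub hxG).elim id hx

end InterpolationTriple

/-- Let `(E, F)` be an interpolation pair of dyadic wavelet sets and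
`G ⊆ E ∪ F` a dyadic wavelet set differing from each of `E` and `F` on a set of
positive measure.  Then `σ_E^F ∘ σ_E^G = σ_F^G` a.e., `σ_F^G` is not a.e. equal to
`id`, and `{id, σ_E^F, σ_E^G}` is not closed under composition (modulo null sets),
so it is not a group and `{E, F, G}` is not an interpolation family. -/
theorem stmt_4 (E F G : Set ℝ) (hE : IsDyadicWaveletSet E) (hF : IsDyadicWaveletSet F)
    (hG : IsDyadicWaveletSet G) (hGsub : G ⊆ E ∪ F)
    (hGE : 0 < volume (G ∆ E)) (hGF : 0 < volume (G ∆ F))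
    (σEF σEG σFG : ℝ → ℝ)
    (hσEF : IsInterpolationMap E F σEF)
    (hpair : ∀ᵐ s : ℝ ∂volume, σEF (σEF s) = s)
    (hσEG : IsInterpolationMap E G σEG)
    (hσFG : IsInterpolationMap F G σFG) :
    (∀ᵐ s : ℝ ∂volume, σEF (σEG s) = σFG s) ∧
    ¬ (σFG =ᵐ[volume] id) ∧
    (∀ h : ℝ → ℝ, h = id ∨ h = σEF ∨ h = σEG → ¬ (σEF ∘ σEG =ᵐ[volume] h)) := by
  have hσFE := hσEF.symm hE hF hpair
  have hcomp : σEF ∘ σEG =ᵐ[volume] σFG := comp_ae_eq hE hF hG hGsub hσFE hσEG hσFG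
  have hGE_ne : ¬ G =ᵐ[volume] E := fun h => hGE.ne' (measure_symmDiff_eq_zero_iff.mpr h)
  have hFG_ne_id : ¬ σFG =ᵐ[volume] id := fun h =>
    hGF.ne' (measure_symmDiff_eq_zero_iff.mpr (hσFG.ae_eq_of_ae_eq_id hF hG h).symm)
  refine ⟨hcomp, hFG_ne_id, ?_⟩
  rintro h (rfl | rfl | rfl) hh
  · exact hFG_ne_id (hcomp.symm.trans hh)
  · exact hGE_ne <| hG.ae_eq_of_ae_le hE <|
      ae_le_of_interpolationMap_target_ae_eq hG hGsub hσFE hσFG (hcomp.symm.trans hh)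
  · exact hGE_ne <| hG.ae_eq_of_ae_le hE <|
      ae_le_of_interpolationMap_source_ae_eq hE hF hG hGsub hσEG hσFG (hh.symm.trans hcomp)
end
end

section
/- Let E, F be dyadic wavelet sets and for n, k ∈ ℤ set E_{n,k} = E ∩ (F − 2nπ) ∩ 2^{-k}F. For a nonzero integer n, let [n] denote the smallest integer k such that 2^k·n ∈ ℤ (equivalently, [n] is the negative of the 2-adic valuation of n). Then D_E^F = D_F^E modulo null sets if and only if for all nonzero integers n, k, m, l: whenever E_{n,k} ∩ (2^l E_{m,l} − 2nπ) has positive Lebesgue measure, one has [n] + l = [m]. -/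
/-!
Off a null set every point `z` behaves as the definitions prescribe. Writing `x = 2^j z ∈ E`
and `x + 2πn ∈ F`, the dilation equivariance of `σ` gives `σ z - z = 2π · 2^{-j} n`, so
`z ∈ D_E^F` iff `2^{-j} n ∈ ℤ`, i.e. iff `[n] ≤ -j` (for `n ≠ 0`). Continuing the chain to
`y = 2^k x ∈ F` and `y + 2πm ∈ E` gives in the same way `z ∈ D_F^E` iff `[m] ≤ -j - k`, and
`y + 2πm` lies in `E_{-m,k'} ∩ (2^k E_{n,k} + 2mπ)`; so the bracket condition is exactly what
makes the two thresholds agree. Conversely, at a point of `E_{n,k} ∩ (2^l E_{m,l} - 2nπ)` the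
agreement of the two domains along the whole dyadic orbit of the point forces `[n] + l = [m]`.
All points involved lie in the countable orbit `{2^a z + 2πq}`, so a.e. properties of `z` can
be evaluated at them.
-/

open MeasureTheory Set
open scoped Real symmDiff

noncomputable section

/-- `E_{n,k} = E ∩ (F − 2nπ) ∩ 2^{-k}F`. -/
def Enk (E F : Set ℝ) (n k : ℤ) : Set ℝ :=
  E ∩ {x : ℝ | x + 2 * Real.pi * n ∈ F} ∩ {x : ℝ | (2 : ℝ) ^ k * x ∈ F}

/-- `E_{n,k} ∩ (2^l E_{m,l} − 2nπ)`. -/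
def EnkTest (E F : Set ℝ) (n k m l : ℤ) : Set ℝ :=
  Enk E F n k ∩ {x : ℝ | (2 : ℝ) ^ (-l) * (x + 2 * Real.pi * n) ∈ Enk E F m l}

/-- `[n]`: the smallest integer `k` with `2^k·n ∈ ℤ`, i.e. the negative of the
`2`-adic valuation of `n` (for `n ≠ 0`). -/
def bracket (n : ℤ) : ℤ := -(padicValInt 2 n)

lemma two_zpow_mul_two_zpow_mul (a b : ℤ) (x : ℝ) :
    (2 : ℝ) ^ a * ((2 : ℝ) ^ b * x) = (2 : ℝ) ^ (a + b) * x := by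
  rw [← mul_assoc, ← zpow_add₀ two_ne_zero]

lemma two_zpow_neg_mul_two_zpow_mul (a : ℤ) (x : ℝ) :
    (2 : ℝ) ^ (-a) * ((2 : ℝ) ^ a * x) = x := by
  rw [two_zpow_mul_two_zpow_mul, neg_add_cancel, zpow_zero, one_mul]

lemma two_zpow_mul_two_zpow_neg_mul (a : ℤ) (x : ℝ) :
    (2 : ℝ) ^ a * ((2 : ℝ) ^ (-a) * x) = x := by
  simpa using two_zpow_neg_mul_two_zpow_mul (-a) x

lemma ExistsUnique.eq_iff {α : Type*} {p : α → Prop} (h : ∃! a, p a) {a b : α} (ha : p a) :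
    a = b ↔ p b :=
  ⟨fun hab => hab ▸ ha, fun hb => h.unique ha hb⟩

lemma eq_zero_iff_of_existsUnique_translate {A : Set ℝ} {w : ℝ} {n : ℤ}
    (h : ∃! n : ℤ, w + 2 * π * n ∈ A) (hn : w + 2 * π * n ∈ A) : n = 0 ↔ w ∈ A := by
  simpa using h.eq_iff hn (b := 0)

lemma eq_zero_iff_of_existsUnique_dilate {A : Set ℝ} {w : ℝ} {k : ℤ}
    (h : ∃! k : ℤ, (2 : ℝ) ^ k * w ∈ A) (hk : (2 : ℝ) ^ k * w ∈ A) : k = 0 ↔ w ∈ A := by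
  simpa using h.eq_iff hk (b := 0)

lemma bracket_neg (n : ℤ) : bracket (-n) = bracket n := by
  simp only [bracket, padicValInt, Int.natAbs_neg]

lemma exists_int_eq_two_zpow_mul_iff {n : ℤ} (hn : n ≠ 0) (j : ℤ) :
    (∃ i : ℤ, (2 : ℝ) ^ j * n = i) ↔ bracket n ≤ j := by
  obtain ⟨t, rfl | rfl⟩ := j.eq_nat_or_neg
  · refine iff_of_true ⟨2 ^ t * n, by push_cast; rfl⟩ ?_
    unfold bracket
    omega
  · have hdvd : (∃ i : ℤ, (2 : ℝ) ^ (-(t : ℤ)) * n = i) ↔ (2 : ℤ) ^ t ∣ n := by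
      have h2t : (2 : ℝ) ^ t ≠ 0 := pow_ne_zero t two_ne_zero
      simp_rw [zpow_neg, zpow_natCast, inv_mul_eq_iff_eq_mul₀ h2t]
      exact ⟨fun ⟨i, hi⟩ => ⟨i, by exact_mod_cast hi⟩, fun ⟨i, hi⟩ => ⟨i, by exact_mod_cast hi⟩⟩
    have hval := padicValInt_dvd_iff (p := 2) t n
    rw [Nat.cast_ofNat] at hval
    rw [hdvd, hval, bracket]
    simp only [hn, false_or]
    omega

lemma ae_comp_mul_add {P : ℝ → Prop} (h : ∀ᵐ w, P w) {a : ℝ} (ha : a ≠ 0) (c : ℝ) :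
    ∀ᵐ z, P (a * z + c) := by
  rw [ae_iff] at h ⊢
  change volume ((a * ·) ⁻¹' ((· + c) ⁻¹' {w | ¬ P w})) = 0
  rw [Real.volume_preimage_mul_left ha, measure_preimage_add_right, h, mul_zero]

lemma ae_imp_of_measure_pos {α : Type*} [MeasurableSpace α] {μ : Measure α} {S : Set α}
    {Q : Prop} (h : 0 < μ S → Q) : ∀ᵐ w ∂μ, w ∈ S → Q := by
  by_cases hQ : Q
  · exact .of_forall fun _ _ => hQ
  · have hS : μ S = 0 := nonpos_iff_eq_zero.mp (not_lt.mp (mt h hQ))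
    filter_upwards [measure_eq_zero_iff_ae_notMem.mp hS] with w hw hwS
    exact absurd hwS hw

-- `q` ranges over `ℚ` rather than `ℤ` so that the orbit is also closed under dilations.
def HoldsOnAffineOrbit (P : ℝ → Prop) (x : ℝ) : Prop :=
  ∀ (a : ℤ) (q : ℚ), P ((2 : ℝ) ^ a * x + 2 * π * q)

namespace HoldsOnAffineOrbit

variable {P : ℝ → Prop} {x : ℝ}

lemma self (h : HoldsOnAffineOrbit P x) : P x := by
  simpa using h 0 0

lemma two_zpow_mul (h : HoldsOnAffineOrbit P x) (b : ℤ) :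
    HoldsOnAffineOrbit P ((2 : ℝ) ^ b * x) := fun a q => by
  simpa only [two_zpow_mul_two_zpow_mul] using h (a + b) q

lemma add_two_pi_mul (h : HoldsOnAffineOrbit P x) (r : ℤ) :
    HoldsOnAffineOrbit P (x + 2 * π * r) := fun a q => by
  have e : (2 : ℝ) ^ a * (x + 2 * π * r) + 2 * π * q
      = (2 : ℝ) ^ a * x + 2 * π * ((2 ^ a * r + q : ℚ) : ℝ) := by
    push_cast
    ring
  simpa only [e] using h a (2 ^ a * r + q)

end HoldsOnAffineOrbit

lemma ae_holdsOnAffineOrbit {P : ℝ → Prop} (h : ∀ᵐ w, P w) :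
    ∀ᵐ x, HoldsOnAffineOrbit P x := by
  simp only [HoldsOnAffineOrbit, ae_all_iff]
  exact fun a q => ae_comp_mul_add h (zpow_ne_zero a two_ne_zero) _

structure IsRegularPoint (E F : Set ℝ) (σ : ℝ → ℝ) (w : ℝ) : Prop where
  existsUnique_translate : ∃! n : ℤ, w + 2 * π * n ∈ E
  existsUnique_dilate : ∃! k : ℤ, (2 : ℝ) ^ k * w ∈ E
  mapsTo : w ∈ E → σ w ∈ F ∧ ∃ n : ℤ, σ w - w = 2 * π * n
  dilation : ∀ j : ℤ, (2 : ℝ) ^ (-j) * w ∈ E → σ w = (2 : ℝ) ^ j * σ ((2 : ℝ) ^ (-j) * w)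

lemma ae_isRegularPoint {E F : Set ℝ} {σ : ℝ → ℝ} (hE : IsDyadicWaveletSet E)
    (hσ : IsInterpolationMap E F σ) : ∀ᵐ w, IsRegularPoint E F σ w := by
  filter_upwards [hE.2.1, hE.2.2, hσ.2.2.1, ae_all_iff.mpr hσ.2.2.2] with w h₁ h₂ h₃ h₄
  exact ⟨h₁, h₂, h₃, h₄⟩

lemma IsRegularPoint.mem_congruenceDomain_iff {E F : Set ℝ} {σ : ℝ → ℝ} {x : ℝ} {j n : ℤ}
    (hz : IsRegularPoint E F σ ((2 : ℝ) ^ j * x)) (hx : IsRegularPoint E F σ x)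
    (hF : ∃! n : ℤ, x + 2 * π * n ∈ F) (hxE : x ∈ E) (hxF : x + 2 * π * n ∈ F) :
    (2 : ℝ) ^ j * x ∈ CongruenceDomain σ ↔ ∃ i : ℤ, (2 : ℝ) ^ j * n = i := by
  have hback := two_zpow_neg_mul_two_zpow_mul j x
  obtain ⟨hσxF, n', hn'⟩ := hx.mapsTo hxE
  have hσx : σ x = x + 2 * π * n' := by linarith
  obtain rfl : n' = n := hF.unique (hσx ▸ hσxF) hxF
  have hσz : σ ((2 : ℝ) ^ j * x) - (2 : ℝ) ^ j * x = 2 * π * ((2 : ℝ) ^ j * n') := by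
    rw [hz.dilation j (by rwa [hback]), hback, hσx]
    ring
  simp only [CongruenceDomain, mem_ofPred_eq, hσz, mul_right_inj' Real.two_pi_pos.ne']

def BracketCriterionAt (E F : Set ℝ) (w : ℝ) : Prop :=
  ∀ n k m l : ℤ, w ∈ EnkTest E F n k m l → n ≠ 0 → k ≠ 0 → m ≠ 0 → l ≠ 0 →
    bracket n + l = bracket m

section Criterion

variable {E F : Set ℝ} {σ τ : ℝ → ℝ} {x : ℝ}

lemma HoldsOnAffineOrbit.mem_congruenceDomain_iff
    (hσ : HoldsOnAffineOrbit (IsRegularPoint E F σ) x)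
    (hτ : HoldsOnAffineOrbit (IsRegularPoint F E τ) x) {n : ℤ} (hxE : x ∈ E)
    (hxF : x + 2 * π * n ∈ F) (j : ℤ) :
    (2 : ℝ) ^ j * x ∈ CongruenceDomain σ ↔ ∃ i : ℤ, (2 : ℝ) ^ j * n = i :=
  (hσ.two_zpow_mul j).self.mem_congruenceDomain_iff hσ.self hτ.self.existsUnique_translate
    hxE hxF

lemma bracket_add_eq_of_mem_enkTest (hσ : HoldsOnAffineOrbit (IsRegularPoint E F σ) x)
    (hτ : HoldsOnAffineOrbit (IsRegularPoint F E τ) x)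
    (hD : HoldsOnAffineOrbit (fun w => w ∈ CongruenceDomain σ ↔ w ∈ CongruenceDomain τ) x)
    {n k m l : ℤ} (hx : x ∈ EnkTest E F n k m l) (hn : n ≠ 0) (hm : m ≠ 0) :
    bracket n + l = bracket m := by
  simp only [EnkTest, Enk, mem_inter_iff, mem_ofPred_eq] at hx
  obtain ⟨⟨⟨hxE, hxF⟩, -⟩, ⟨hx₂E, hx₂F⟩, -⟩ := hx
  set x₂ := (2 : ℝ) ^ (-l) * (x + 2 * π * n)
  have hx₂ : (2 : ℝ) ^ l * x₂ = x + 2 * π * n := two_zpow_mul_two_zpow_neg_mul l _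
  have hback : (2 : ℝ) ^ l * x₂ + 2 * π * (-n : ℤ) = x := by
    rw [hx₂]
    push_cast
    ring
  have hσ₂ := (hσ.add_two_pi_mul n).two_zpow_mul (-l)
  have hτ₂ := (hτ.add_two_pi_mul n).two_zpow_mul (-l)
  have hD₂ := (hD.add_two_pi_mul n).two_zpow_mul (-l)
  have key (j : ℤ) : bracket m ≤ j ↔ bracket n + l ≤ j := by
    have hσj := hσ₂.mem_congruenceDomain_iff hτ₂ hx₂E hx₂F j
    have hτj := (hτ₂.two_zpow_mul l).mem_congruenceDomain_iff (hσ₂.two_zpow_mul l)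
      (by rwa [hx₂]) (by rwa [hback]) (j - l)
    rw [two_zpow_mul_two_zpow_mul, sub_add_cancel] at hτj
    have h := hσj.symm.trans (((hD₂.two_zpow_mul j).self).trans hτj)
    rw [exists_int_eq_two_zpow_mul_iff hm, exists_int_eq_two_zpow_mul_iff (neg_ne_zero.mpr hn),
      bracket_neg] at h
    omega
  exact le_antisymm ((key _).1 le_rfl) ((key _).2 le_rfl)

lemma add_two_pi_mul_mem_enkTest {n k m k' : ℤ} (hxE : x ∈ E) (hxF : x + 2 * π * n ∈ F)
    (hyF : (2 : ℝ) ^ k * x ∈ F) (hyE : (2 : ℝ) ^ k * x + 2 * π * m ∈ E)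
    (hwF : (2 : ℝ) ^ k' * ((2 : ℝ) ^ k * x + 2 * π * m) ∈ F) :
    (2 : ℝ) ^ k * x + 2 * π * m ∈ EnkTest E F (-m) k' n k := by
  have hy : (2 : ℝ) ^ k * x + 2 * π * m + 2 * π * (-m : ℤ) = (2 : ℝ) ^ k * x := by
    push_cast
    ring
  simp only [EnkTest, Enk, mem_inter_iff, mem_ofPred_eq, hy, two_zpow_neg_mul_two_zpow_mul]
  exact ⟨⟨⟨hyE, hyF⟩, hwF⟩, ⟨hxE, hxF⟩, hyF⟩

lemma translate_eq_zero_iff_of_chain {n k m : ℤ} (hσx : IsRegularPoint E F σ x)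
    (hτx : IsRegularPoint F E τ x) (hσy : IsRegularPoint E F σ ((2 : ℝ) ^ k * x))
    (hxE : x ∈ E) (hxF : x + 2 * π * n ∈ F) (hyF : (2 : ℝ) ^ k * x ∈ F)
    (hyE : (2 : ℝ) ^ k * x + 2 * π * m ∈ E) :
    n = 0 ↔ m = 0 := by
  rw [eq_zero_iff_of_existsUnique_translate hτx.existsUnique_translate hxF,
    ← eq_zero_iff_of_existsUnique_dilate hτx.existsUnique_dilate hyF, eq_comm,
    hσx.existsUnique_dilate.eq_iff (a := 0) (by simpa using hxE),
    eq_zero_iff_of_existsUnique_translate hσy.existsUnique_translate hyE]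

lemma bracket_add_eq_of_chain (hσ : HoldsOnAffineOrbit (IsRegularPoint E F σ) x)
    (hτ : HoldsOnAffineOrbit (IsRegularPoint F E τ) x)
    (hB : HoldsOnAffineOrbit (BracketCriterionAt E F) x) {n k m : ℤ}
    (hxE : x ∈ E) (hxF : x + 2 * π * n ∈ F) (hyF : (2 : ℝ) ^ k * x ∈ F)
    (hyE : (2 : ℝ) ^ k * x + 2 * π * m ∈ E) (hn : n ≠ 0) :
    bracket m + k = bracket n := by
  have hσy := hσ.two_zpow_mul k
  have hτy := hτ.two_zpow_mul k
  have hk : k ≠ 0 := by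
    rwa [Ne, eq_zero_iff_of_existsUnique_dilate hτ.self.existsUnique_dilate hyF,
      ← eq_zero_iff_of_existsUnique_translate hτ.self.existsUnique_translate hxF]
  have hm : m ≠ 0 := by
    rwa [Ne, ← translate_eq_zero_iff_of_chain hσ.self hτ.self hσy.self hxE hxF hyF hyE]
  have hFd := (hτy.add_two_pi_mul m).self.existsUnique_dilate
  obtain ⟨k', hwF⟩ := hFd.exists
  have hk' : k' ≠ 0 := by
    rw [Ne, eq_zero_iff_of_existsUnique_dilate hFd hwF]
    exact fun hw => hm (hτy.self.existsUnique_translate.unique hw (by simpa using hyF))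
  have h := (hB.two_zpow_mul k |>.add_two_pi_mul m).self (-m) k' n k
    (add_two_pi_mul_mem_enkTest hxE hxF hyF hyE hwF) (neg_ne_zero.mpr hm) hk' hn hk
  rwa [bracket_neg] at h

lemma mem_congruenceDomain_iff_of_bracketCriterion {z : ℝ}
    (hσ : HoldsOnAffineOrbit (IsRegularPoint E F σ) z)
    (hτ : HoldsOnAffineOrbit (IsRegularPoint F E τ) z)
    (hB : HoldsOnAffineOrbit (BracketCriterionAt E F) z) :
    z ∈ CongruenceDomain σ ↔ z ∈ CongruenceDomain τ := by
  obtain ⟨j, hxE⟩ := hσ.self.existsUnique_dilate.exists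
  have hσx := hσ.two_zpow_mul j
  have hτx := hτ.two_zpow_mul j
  obtain ⟨n, hxF⟩ := hτx.self.existsUnique_translate.exists
  obtain ⟨k, hyF⟩ := hτx.self.existsUnique_dilate.exists
  have hσy := hσx.two_zpow_mul k
  have hτy := hτx.two_zpow_mul k
  obtain ⟨m, hyE⟩ := hσy.self.existsUnique_translate.exists
  have hσz : z ∈ CongruenceDomain σ ↔ ∃ i : ℤ, (2 : ℝ) ^ (-j) * n = i := by
    have h := hσx.mem_congruenceDomain_iff hτx hxE hxF (-j)
    rwa [two_zpow_neg_mul_two_zpow_mul] at h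
  have hτz : z ∈ CongruenceDomain τ ↔ ∃ i : ℤ, (2 : ℝ) ^ (-j - k) * m = i := by
    have h := hτy.mem_congruenceDomain_iff hσy hyF hyE (-j - k)
    rwa [two_zpow_mul_two_zpow_mul, two_zpow_mul_two_zpow_mul, show -j - k + k + j = 0 by ring,
      zpow_zero, one_mul] at h
  rw [hσz, hτz]
  by_cases hn : n = 0
  · obtain rfl : m = 0 :=
      (translate_eq_zero_iff_of_chain hσx.self hτx.self hσy.self hxE hxF hyF hyE).1 hn
    subst hn
    exact iff_of_true ⟨0, by simp⟩ ⟨0, by simp⟩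
  have hm : m ≠ 0 := by
    rwa [Ne, ← translate_eq_zero_iff_of_chain hσx.self hτx.self hσy.self hxE hxF hyF hyE]
  have h := bracket_add_eq_of_chain hσx hτx (hB.two_zpow_mul j) hxE hxF hyF hyE hn
  rw [exists_int_eq_two_zpow_mul_iff hn, exists_int_eq_two_zpow_mul_iff hm]
  omega

end Criterion

/-- Theorem 3(ii) of the paper.  For dyadic wavelet sets `E, F`,
`D_E^F = D_F^E` modulo null sets iff whenever `E_{n,k} ∩ (2^l E_{m,l} − 2nπ)` has
positive measure for nonzero integers `n, k, m, l`, one has `[n] + l = [m]`. -/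
theorem stmt_7 (E F : Set ℝ) (hE : IsDyadicWaveletSet E) (hF : IsDyadicWaveletSet F)
    (σ τ : ℝ → ℝ) (hσ : IsInterpolationMap E F σ) (hτ : IsInterpolationMap F E τ) :
    volume ((CongruenceDomain σ) ∆ (CongruenceDomain τ)) = 0 ↔
      (∀ n k m l : ℤ, n ≠ 0 → k ≠ 0 → m ≠ 0 → l ≠ 0 →
        0 < volume (EnkTest E F n k m l) → bracket n + l = bracket m) := by
  have hσ' := ae_holdsOnAffineOrbit (ae_isRegularPoint hE hσ)
  have hτ' := ae_holdsOnAffineOrbit (ae_isRegularPoint hF hτ)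
  rw [measure_symmDiff_eq_zero_iff, Filter.eventuallyEq_set]
  constructor
  · intro hD n k m l hn _ hm _ hpos
    obtain ⟨x, hx, hσx, hτx, hDx⟩ := Measure.exists_mem_of_measure_ne_zero_of_ae hpos.ne'
      (ae_restrict_of_ae (hσ'.and (hτ'.and (ae_holdsOnAffineOrbit hD))))
    exact bracket_add_eq_of_mem_enkTest hσx hτx hDx hx hn hm
  · intro hcrit
    have hB : ∀ᵐ w, BracketCriterionAt E F w := by
      simp only [BracketCriterionAt, ae_all_iff]
      exact fun n k m l => ae_imp_of_measure_pos fun hpos hn hk hm hl =>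
        hcrit n k m l hn hk hm hl hpos
    filter_upwards [hσ', hτ', ae_holdsOnAffineOrbit hB] with z hσz hτz hBz
    exact mem_congruenceDomain_iff_of_bracketCriterion hσz hτz hBz
end
end
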